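/- arXiv:2510.17718 — 6 statements merged into one kernel-verified Lean document; each statement's English description precedes it below -/
import Mathlib

section
/- There exist C₀ > 0 and s₂ ≥ 0, depending only on p, such that for all s ≥ s₂ and all y ∈ ℝ, 0 ≤ φ(y,s) ≤ κ + C₀ e^{−s/3}. -/
open Real MeasureTheory Filter

/-- κ = (p−1)^{−1/(p−1)} -/
noncomputable def kappa (p : ℝ) : ℝ := (p - 1) ^ (-(1 / (p - 1)))

/-- Rescaled Hermite polynomial h_m(y) = ∑_{i=0}^{⌊m/2⌋} (m!/(i!(m−2i)!)) (−1)^i y^{m−2i}. -/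
noncomputable def hmPoly (m : ℕ) (y : ℝ) : ℝ :=
  ∑ i ∈ Finset.range (m / 2 + 1),
    ((Nat.factorial m : ℝ) / ((Nat.factorial i : ℝ) * (Nat.factorial (m - 2 * i) : ℝ)))
      * (-1 : ℝ) ^ i * y ^ (m - 2 * i)

/-- P(y) = ((p−1)/κ)(y⁴ − h₄(y)). -/
noncomputable def Ppoly (p y : ℝ) : ℝ := ((p - 1) / kappa p) * (y ^ 4 - hmPoly 4 y)

/-- D(y,s) = p−1 + ((p−1)²/κ) y⁴ e^{−s}. -/
noncomputable def Dfun (p y s : ℝ) : ℝ :=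
  (p - 1) + ((p - 1) ^ 2 / kappa p) * y ^ 4 * Real.exp (-s)

/-- E(y,s) = 1 + e^{−s} P(y). -/
noncomputable def Efun (p y s : ℝ) : ℝ := 1 + Real.exp (-s) * Ppoly p y

/-- Modified blow-up profile φ(y,s) = (E(y,s)/D(y,s))^{1/(p−1)}. -/
noncomputable def phi (p y s : ℝ) : ℝ := (Efun p y s / Dfun p y s) ^ (1 / (p - 1))

/-- Flat blow-up profile f(z) = (p−1 + ((p−1)²/κ) z⁴)^{−1/(p−1)}. -/
noncomputable def fprof (p z : ℝ) : ℝ :=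
  ((p - 1) + ((p - 1) ^ 2 / kappa p) * z ^ 4) ^ (-(1 / (p - 1)))

/-- One-dimensional Gaussian weight ρ₁(y) = e^{−y²/4}/√(4π). -/
noncomputable def rho1 (y : ℝ) : ℝ := Real.exp (-(y ^ 2) / 4) / Real.sqrt (4 * Real.pi)

/-- Weighted norm ‖g‖_{L^r_{ρ₁}} = (∫ |g(y)|^r ρ₁(y) dy)^{1/r}. -/
noncomputable def LrhoNorm (r : ℝ) (g : ℝ → ℝ) : ℝ :=
  (∫ y : ℝ, |g y| ^ r * rho1 y) ^ (1 / r)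

/-- Gaussian weight on ℝ^d: ρ_d(Y) = (4π)^{−d/2} e^{−|Y|²/4}. -/
noncomputable def rhod (d : ℕ) (Y : EuclideanSpace ℝ (Fin d)) : ℝ :=
  (4 * Real.pi) ^ (-(d : ℝ) / 2) * Real.exp (-‖Y‖ ^ 2 / 4)

/-- for s large enough, 0 ≤ φ(y,s) ≤ κ + C₀ e^{−s/3}. -/
theorem statement2 (p : ℝ) (hp : 1 < p) :
    ∃ C₀ > (0 : ℝ), ∃ s₂ : ℝ, 0 ≤ s₂ ∧ ∀ s ≥ s₂, ∀ y : ℝ,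
      0 ≤ phi p y s ∧ phi p y s ≤ kappa p + C₀ * Real.exp (-s / 3) := by
  have hp1 : (0:ℝ) < p - 1 := by linarith
  have hκ : 0 < kappa p := Real.rpow_pos_of_pos hp1 _
  set q : ℝ := 1 / (p - 1) with hqdef
  have hq : 0 < q := by positivity
  set b : ℝ := (p - 1) / kappa p with hbdef
  have hb : 0 < b := by positivity
  set K : ℝ := 36 * b with hKdef
  have hK : 0 < K := by positivity
  set M : ℝ := q * K * Real.exp (q * K) with hMdef
  have hM : 0 < M := by positivity
  refine ⟨kappa p * M, by positivity, max 0 (Real.log (12 * b)), le_max_left _ _, ?_⟩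
  intro s hs y
  set a : ℝ := Real.exp (-s) with hadef
  have ha0 : 0 < a := Real.exp_pos _
  have hs0 : 0 ≤ s := le_trans (le_max_left _ _) hs
  have ha1 : a ≤ 1 := by
    rw [hadef, show (1:ℝ) = Real.exp 0 by rw [Real.exp_zero]]
    exact Real.exp_le_exp.2 (by linarith)
  have hac : a * (12 * b) ≤ 1 := by
    have h1 : Real.log (12 * b) ≤ s := le_trans (le_max_right _ _) hs
    have h2 : a ≤ (12 * b)⁻¹ := by
      rw [hadef, show ((12:ℝ) * b)⁻¹ = Real.exp (-(Real.log (12 * b))) by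
        rw [Real.exp_neg, Real.exp_log (by positivity)]]
      exact Real.exp_le_exp.2 (by linarith)
    calc a * (12 * b) ≤ (12 * b)⁻¹ * (12 * b) := by nlinarith
      _ = 1 := inv_mul_cancel₀ (by positivity)
  have hP : Ppoly p y = 12 * b * (y ^ 2 - 1) := by
    rw [hbdef]
    norm_num [Ppoly, hmPoly, Finset.sum_range_succ, Nat.factorial]
    ring
  have hEeq : Efun p y s = 1 + a * (12 * b * (y ^ 2 - 1)) := by
    rw [Efun, hP, hadef]
  have hE0 : 0 ≤ Efun p y s := by
    rw [hEeq]
    nlinarith [mul_nonneg (mul_nonneg ha0.le hb.le) (sq_nonneg y)]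
  have hDeq : Dfun p y s = (p - 1) * (1 + b * a * y ^ 4) := by
    rw [Dfun, hbdef, hadef]; field_simp
  have hD0 : 0 < Dfun p y s := by rw [hDeq]; positivity
  have core : 1 + a * (12 * b * (y ^ 2 - 1)) ≤ (1 + K * a) * (1 + b * a * y ^ 4) := by
    rw [hKdef]
    nlinarith [mul_nonneg (mul_nonneg hb.le ha0.le) (sq_nonneg (y ^ 2 - 6)),
      sq_nonneg (b * a * y ^ 2), mul_nonneg hb.le ha0.le]
  have key : Efun p y s / Dfun p y s ≤ (1 + K * a) / (p - 1) := by
    rw [div_le_div_iff₀ hD0 hp1, hDeq]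
    calc Efun p y s * (p - 1) ≤ ((1 + K * a) * (1 + b * a * y ^ 4)) * (p - 1) := by
          rw [hEeq]; exact mul_le_mul_of_nonneg_right core hp1.le
      _ = (1 + K * a) * ((p - 1) * (1 + b * a * y ^ 4)) := by ring
  have hphi_le : phi p y s ≤ ((1 + K * a) / (p - 1)) ^ q := by
    rw [phi, ← hqdef]
    exact Real.rpow_le_rpow (div_nonneg hE0 hD0.le) key hq.le
  have hκ' : kappa p = (p - 1) ^ (-q) := by rw [kappa, hqdef]
  have hsplit : ((1 + K * a) / (p - 1)) ^ q = (1 + K * a) ^ q * kappa p := by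
    rw [Real.div_rpow (by positivity) hp1.le, div_eq_mul_inv, ← Real.rpow_neg hp1.le, hκ']
  have hexp : ∀ u : ℝ, 0 ≤ u → Real.exp u ≤ 1 + u * Real.exp u := by
    intro u hu
    have h := Real.add_one_le_exp (-u)
    rw [Real.exp_neg] at h
    have he := Real.exp_pos u
    nlinarith [mul_le_mul_of_nonneg_right h he.le, inv_mul_cancel₀ he.ne']
  have hpow : (1 + K * a) ^ q ≤ 1 + M * a := by
    have h1 : (1 + K * a) ^ q = Real.exp (Real.log (1 + K * a) * q) :=
      Real.rpow_def_of_pos (by positivity) q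
    have h2 : Real.log (1 + K * a) ≤ K * a := by
      have := Real.log_le_sub_one_of_pos (show (0:ℝ) < 1 + K * a by positivity)
      linarith
    have h3 : Real.exp (Real.log (1 + K * a) * q) ≤ Real.exp (q * (K * a)) := by
      refine Real.exp_le_exp.2 ?_
      calc Real.log (1 + K * a) * q ≤ (K * a) * q :=
            mul_le_mul_of_nonneg_right h2 hq.le
        _ = q * (K * a) := by ring
    have h4 : Real.exp (q * (K * a)) ≤ 1 + (q * (K * a)) * Real.exp (q * (K * a)) :=
      hexp _ (by positivity)
    have h5 : Real.exp (q * (K * a)) ≤ Real.exp (q * K) := by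
      refine Real.exp_le_exp.2 ?_
      calc q * (K * a) = q * K * a := by ring
        _ ≤ q * K * 1 := mul_le_mul_of_nonneg_left ha1 (by positivity)
        _ = q * K := by ring
    have h6 : (q * (K * a)) * Real.exp (q * (K * a)) ≤ q * K * Real.exp (q * K) * a := by
      calc (q * (K * a)) * Real.exp (q * (K * a))
          = (q * K * a) * Real.exp (q * (K * a)) := by ring
        _ ≤ (q * K * a) * Real.exp (q * K) :=
            mul_le_mul_of_nonneg_left h5 (by positivity)
        _ = q * K * Real.exp (q * K) * a := by ring
    calc (1 + K * a) ^ q = Real.exp (Real.log (1 + K * a) * q) := h1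
      _ ≤ Real.exp (q * (K * a)) := h3
      _ ≤ 1 + (q * (K * a)) * Real.exp (q * (K * a)) := h4
      _ ≤ 1 + q * K * Real.exp (q * K) * a := by linarith
      _ = 1 + M * a := by rw [hMdef]
  constructor
  · rw [phi]; exact Real.rpow_nonneg (div_nonneg hE0 hD0.le) _
  · have hae : a ≤ Real.exp (-s / 3) := by
      rw [hadef]; exact Real.exp_le_exp.2 (by linarith)
    calc phi p y s ≤ ((1 + K * a) / (p - 1)) ^ q := hphi_le
      _ = (1 + K * a) ^ q * kappa p := hsplit
      _ ≤ (1 + M * a) * kappa p := mul_le_mul_of_nonneg_right hpow hκ.le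
      _ = kappa p + (kappa p * M) * a := by ring
      _ ≤ kappa p + (kappa p * M) * Real.exp (-s / 3) :=
          add_le_add_right (mul_le_mul_of_nonneg_left hae (by positivity)) _
end

section
/- There exist C₀ > 0 and s₂ ≥ 0, depending only on p, such that for all s ≥ s₂ and all y ∈ ℝ, the partial derivative ∂_yφ(y,s) exists and satisfies |∂_yφ(y,s)| ≤ C₀ e^{−s/4}. -/
open Real MeasureTheory Filter

lemma Ppoly_eq (p y : ℝ) : Ppoly p y = (12 * (p - 1) / kappa p) * (y ^ 2 - 1) := by
  have h4 : hmPoly 4 y = y ^ 4 - 12 * y ^ 2 + 12 := by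
    simp [hmPoly, Finset.sum_range_succ, Nat.factorial]
    ring
  simp only [Ppoly, h4]
  ring

lemma aux1 (c u z : ℝ) (hc : 0 < c) (hu : 0 < u) (hu1 : u ≤ 1) (hz : 0 ≤ z) :
    c * (2 * z) * u ^ 4 ≤ (2 * c + 2) * u * (1 / 2 + c * u ^ 4 * z ^ 2) := by
  have hu' : 0 ≤ 1 - u := by linarith
  have h1 : 0 ≤ u * (c * u ^ 2 * z - 1) ^ 2 := by positivity
  have h2 : 0 ≤ c * z * (u ^ 3 * (1 - u)) := by positivity
  have h3 : 0 ≤ c ^ 2 * (u ^ 5 * z ^ 2) := by positivity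
  have h4 : 0 ≤ c * (u ^ 5 * z ^ 2) := by positivity
  have h5 : 0 ≤ c * u := by positivity
  nlinarith [h1, h2, h3, h4, h5]

lemma aux2 (a q t : ℝ) (ha : 0 < a) (hq : 0 < q) (ht : 0 ≤ t) :
    4 * a * t ^ 3 * q ≤ (4 * a + 4 * q) * (q + a * t ^ 4) := by
  have h3 : t ^ 3 ≤ 1 + t ^ 4 := by
    nlinarith [sq_nonneg (t ^ 2 - t), sq_nonneg (t - 1), sq_nonneg t, sq_nonneg (t ^ 2 - 1)]
  have h4 : 0 ≤ a * q * t ^ 4 := by positivity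
  have h5 : 0 ≤ q ^ 2 := by positivity
  have h6 : 0 ≤ a ^ 2 * t ^ 4 := by positivity
  nlinarith [mul_le_mul_of_nonneg_left h3 (mul_pos (mul_pos (by norm_num : (0:ℝ) < 4) ha) hq).le]

lemma aux3 (a q c w y : ℝ) (ha : 0 < a) (hq : 0 < q) (hc : 0 < c) (hw : 0 < w) (hw1 : w ≤ 1) :
    (1 + w ^ 2 * (c * (y ^ 2 - 1))) * (2 * a * q)
      ≤ (2 * a + c ^ 2 + 2 * a * q) * (q + a * y ^ 4 * w ^ 2) := by
  have hw' : 0 ≤ 1 - w := by linarith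
  have h1 : 0 ≤ q * (a * (w * y ^ 2) - c) ^ 2 := by positivity
  have h2 : 0 ≤ q * c * a * (w * (1 - w) * y ^ 2) := by positivity
  have h3 : 0 ≤ a * q ^ 2 := by positivity
  have h4 : 0 ≤ a ^ 2 * q * (y ^ 4 * w ^ 2) := by positivity
  have h5 : 0 ≤ c ^ 2 * a * (y ^ 4 * w ^ 2) := by positivity
  have h6 : 0 ≤ a * c * q * w ^ 2 := by positivity
  have h7 : 0 ≤ a ^ 2 * (y ^ 4 * w ^ 2) := by positivity
  nlinarith [h1, h2, h3, h4, h5, h6, h7]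

set_option maxHeartbeats 1000000 in
/-- for s large enough, ∂_yφ(y,s) exists and |∂_yφ(y,s)| ≤ C₀ e^{−s/4}. -/
theorem statement3 (p : ℝ) (hp : 1 < p) :
    ∃ C₀ > (0 : ℝ), ∃ s₂ : ℝ, 0 ≤ s₂ ∧ ∀ s ≥ s₂, ∀ y : ℝ,
      DifferentiableAt ℝ (fun z => phi p z s) y ∧
      |deriv (fun z => phi p z s) y| ≤ C₀ * Real.exp (-s / 4) := by
  have hq : (0:ℝ) < p - 1 := by linarith
  have hk : (0:ℝ) < kappa p := Real.rpow_pos_of_pos hq _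
  set q : ℝ := p - 1 with hqdef
  set c : ℝ := 12 * q / kappa p with hcdef
  set a : ℝ := q ^ 2 / kappa p with hadef
  have hc : 0 < c := by positivity
  have ha : 0 < a := by positivity
  set al : ℝ := 1 / q with haldef
  have hal : 0 < al := by positivity
  set M : ℝ := (2 * a + c ^ 2 + 2 * a * q) / (2 * a * q) with hMdef
  have hM : 0 < M := by positivity
  set C₁ : ℝ := 2 * c + 2 with hC1def
  set C₂ : ℝ := (4 * a + 4 * q) / q with hC2def
  have hC1 : 0 < C₁ := by positivity
  have hC2 : 0 < C₂ := by positivity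
  clear_value q c a al M C₁ C₂
  refine ⟨al * M ^ al * (C₁ + C₂), by positivity, max 0 (Real.log (2 * c)), le_max_left _ _, ?_⟩
  intro s hs y
  have hs0 : 0 ≤ s := le_trans (le_max_left _ _) hs
  have hsc : c * Real.exp (-s) ≤ 1 / 2 := by
    have h1 : Real.exp (-s) ≤ Real.exp (-(Real.log (2 * c))) :=
      Real.exp_le_exp.2 (by have := le_trans (le_max_right _ _) hs; linarith)
    have h2 : Real.exp (-(Real.log (2 * c))) = (2 * c)⁻¹ := by
      rw [Real.exp_neg, Real.exp_log (by positivity)]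
    rw [h2] at h1
    calc c * Real.exp (-s) ≤ c * (2 * c)⁻¹ := by nlinarith
      _ = 1 / 2 := by field_simp
  -- rewrite E and D
  have hEeq : ∀ z : ℝ, Efun p z s = 1 + Real.exp (-s) * (c * (z ^ 2 - 1)) := by
    intro z; simp only [Efun, Ppoly_eq]; rw [hcdef, hqdef]
  have hDeq : ∀ z : ℝ, Dfun p z s = q + a * z ^ 4 * Real.exp (-s) := by
    intro z; simp only [Dfun]; rw [hadef, hqdef]
  set Ev : ℝ := Efun p y s with hEv
  set Dv : ℝ := Dfun p y s with hDv
  have hexp : (0:ℝ) < Real.exp (-s) := Real.exp_pos _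
  have hElb : 1 / 2 + c * Real.exp (-s) * y ^ 2 ≤ Ev := by
    rw [hEv, hEeq]; nlinarith [sq_nonneg y]
  have hEpos : 0 < Ev := by nlinarith [sq_nonneg y, mul_pos hc hexp]
  have hDpos : 0 < Dv := by
    rw [hDv, hDeq]; nlinarith [pow_pos hexp 1, sq_nonneg (y^2), mul_pos ha hexp]
  -- derivative of E and D
  set E' : ℝ := Real.exp (-s) * (c * (2 * y)) with hE'def
  set D' : ℝ := a * (4 * y ^ 3) * Real.exp (-s) with hD'def
  have hEder : HasDerivAt (fun z => Efun p z s) E' y := by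
    have h0 : (fun z => Efun p z s) = fun z => 1 + Real.exp (-s) * (c * (z ^ 2 - 1)) :=
      funext fun z => hEeq z
    rw [h0]
    have h2 : HasDerivAt (fun z : ℝ => z ^ 2) (2 * y) y := by
      simpa using hasDerivAt_pow 2 y
    have := (((h2.sub_const 1).const_mul c).const_mul (Real.exp (-s))).const_add 1
    convert this using 1
  have hDder : HasDerivAt (fun z => Dfun p z s) D' y := by
    have h0 : (fun z => Dfun p z s) = fun z => q + a * z ^ 4 * Real.exp (-s) :=
      funext fun z => hDeq z
    rw [h0]
    have h2 : HasDerivAt (fun z : ℝ => z ^ 4) (4 * y ^ 3) y := by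
      simpa using hasDerivAt_pow 4 y
    have := (((h2.const_mul a).mul_const (Real.exp (-s))).const_add q
      : HasDerivAt (fun z : ℝ => q + a * z ^ 4 * Real.exp (-s)) (a * (4 * y ^ 3) * Real.exp (-s)) y)
    exact this
  set g : ℝ := Ev / Dv with hgdef
  have hgpos : 0 < g := div_pos hEpos hDpos
  set g' : ℝ := (E' * Dv - Ev * D') / Dv ^ 2 with hg'def
  have hgder : HasDerivAt (fun z => Efun p z s / Dfun p z s) g' y :=
    hEder.div hDder (ne_of_gt hDpos)
  have hphider : HasDerivAt (fun z => phi p z s) (g' * al * g ^ (al - 1)) y := by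
    have h0 : (fun z => phi p z s) = fun z => (Efun p z s / Dfun p z s) ^ al := by
      funext z; simp only [phi, haldef, hqdef]
    rw [h0]
    exact hgder.rpow_const (Or.inl (ne_of_gt hgpos))
  refine ⟨hphider.differentiableAt, ?_⟩
  rw [hphider.deriv]
  -- substitution variables
  set u : ℝ := Real.exp (-s / 4) with hudef
  have hu : 0 < u := Real.exp_pos _
  have hu1 : u ≤ 1 := Real.exp_le_one_iff.2 (by linarith)
  have hu4 : u ^ 4 = Real.exp (-s) := by
    rw [hudef, ← Real.exp_nat_mul]
    norm_num
    ring_nf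
  -- bound |E'| ≤ C₁ u Ev
  have hEbound : |E'| ≤ C₁ * u * Ev := by
    have h1 : |E'| = c * (2 * |y|) * u ^ 4 := by
      rw [hE'def, hu4, abs_mul, abs_mul, abs_mul, abs_of_pos hexp, abs_of_pos hc,
        abs_of_pos (by norm_num : (0:ℝ) < 2)]
      ring
    rw [h1]
    have h2 : C₁ * u * (1 / 2 + c * Real.exp (-s) * y ^ 2) ≤ C₁ * u * Ev :=
      mul_le_mul_of_nonneg_left hElb (by positivity)
    refine le_trans ?_ h2
    rw [← hu4, hC1def, ← sq_abs y]
    exact aux1 c u |y| hc hu hu1 (abs_nonneg y)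
  -- bound |D'| ≤ C₂ u Dv
  have hDbound : |D'| ≤ C₂ * u * Dv := by
    have h1 : |D'| = a * (4 * |y| ^ 3) * u ^ 4 := by
      rw [hD'def, hu4, abs_mul, abs_mul, abs_mul, abs_of_pos hexp, abs_of_pos ha,
        abs_of_pos (by norm_num : (0:ℝ) < 4), abs_pow]
    rw [h1, hDv, hDeq, ← hu4]
    set t : ℝ := u * |y| with htdef
    have ht : 0 ≤ t := by positivity
    have hkey : 4 * a * t ^ 3 * q ≤ (4 * a + 4 * q) * (q + a * t ^ 4) :=
      aux2 a q t ha hq ht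
    have hyeq : y ^ 4 = |y| ^ 4 := by
      rw [← abs_pow, abs_of_nonneg (by positivity : (0:ℝ) ≤ y ^ 4)]
    have expand : a * (4 * |y| ^ 3) * u ^ 4 = (4 * a * t ^ 3) * u := by
      rw [htdef]; ring
    have expand2 : q + a * y ^ 4 * u ^ 4 = q + a * t ^ 4 := by
      rw [htdef, hyeq]; ring
    rw [expand, expand2, hC2def]
    rw [div_mul_eq_mul_div, div_mul_eq_mul_div, le_div_iff₀ hq]
    nlinarith [mul_le_mul_of_nonneg_left hkey hu.le]
  -- bound g ≤ M
  have hgM : g ≤ M := by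
    rw [hgdef, div_le_iff₀ hDpos]
    rw [hEv, hEeq, hDv, hDeq]
    set w : ℝ := Real.exp (-s / 2) with hwdef
    have hw : 0 < w := Real.exp_pos _
    have hw1 : w ≤ 1 := Real.exp_le_one_iff.2 (by linarith)
    have hw2 : w ^ 2 = Real.exp (-s) := by
      rw [hwdef, ← Real.exp_nat_mul]
      norm_num
      ring_nf
    rw [← hw2, hMdef]
    rw [div_mul_eq_mul_div, le_div_iff₀ (by positivity)]
    exact aux3 a q c w y ha hq hc hw hw1
  -- assemble
  have hg'bound : |g'| ≤ (C₁ + C₂) * u * g := by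
    have h1 : |E' * Dv - Ev * D'| ≤ |E'| * Dv + Ev * |D'| := by
      have p1 : E' * Dv ≤ |E'| * Dv := mul_le_mul_of_nonneg_right (le_abs_self E') hDpos.le
      have p2 : -|E'| * Dv ≤ E' * Dv := mul_le_mul_of_nonneg_right (neg_abs_le E') hDpos.le
      have p3 : Ev * D' ≤ Ev * |D'| := mul_le_mul_of_nonneg_left (le_abs_self D') hEpos.le
      have p4 : Ev * -|D'| ≤ Ev * D' := mul_le_mul_of_nonneg_left (neg_abs_le D') hEpos.le
      rw [abs_sub_le_iff]
      constructor <;> nlinarith [p1, p2, p3, p4]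
    have h2 : |E'| * Dv + Ev * |D'| ≤ (C₁ + C₂) * u * (Ev * Dv) := by
      have e1 : |E'| * Dv ≤ (C₁ * u * Ev) * Dv :=
        mul_le_mul_of_nonneg_right hEbound hDpos.le
      have e2 : Ev * |D'| ≤ Ev * (C₂ * u * Dv) :=
        mul_le_mul_of_nonneg_left hDbound hEpos.le
      nlinarith
    rw [hg'def, abs_div, abs_of_pos (by positivity : (0:ℝ) < Dv ^ 2), div_le_iff₀ (by positivity)]
    have : (C₁ + C₂) * u * g * Dv ^ 2 = (C₁ + C₂) * u * (Ev * Dv) := by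
      rw [hgdef]; field_simp
    rw [this]
    exact le_trans h1 h2
  have habs : |g' * al * g ^ (al - 1)| = al * g ^ (al - 1) * |g'| := by
    rw [abs_mul, abs_mul, abs_of_pos hal, abs_of_pos (Real.rpow_pos_of_pos hgpos _)]
    ring
  rw [habs]
  have hstep1 : al * g ^ (al - 1) * |g'| ≤ al * g ^ (al - 1) * ((C₁ + C₂) * u * g) :=
    mul_le_mul_of_nonneg_left hg'bound (by positivity)
  have hstep2 : al * g ^ (al - 1) * ((C₁ + C₂) * u * g) = al * g ^ al * ((C₁ + C₂) * u) := by
    rw [Real.rpow_sub hgpos, Real.rpow_one]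
    field_simp
  have hstep3 : al * g ^ al * ((C₁ + C₂) * u) ≤ al * M ^ al * ((C₁ + C₂) * u) := by
    have h1 := Real.rpow_le_rpow hgpos.le hgM hal.le
    have h0 : (0:ℝ) ≤ (C₁ + C₂) * u := by positivity
    exact mul_le_mul_of_nonneg_right (mul_le_mul_of_nonneg_left h1 hal.le) h0
  calc al * g ^ (al - 1) * |g'| ≤ al * g ^ al * ((C₁ + C₂) * u) := by rw [← hstep2]; exact hstep1
    _ ≤ al * M ^ al * ((C₁ + C₂) * u) := hstep3
    _ = al * M ^ al * (C₁ + C₂) * Real.exp (-s / 4) := by rw [hudef]; ring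
end

section
/- There exist C > 0 and s₂ ≥ 0, depending only on p, such that for all s ≥ s₂ and all y ∈ ℝ, |φ(y,s) − (κ − e^{−s} h₄(y))| ≤ C (1 + y⁸) e^{−2s}. In other words, φ(y,s) = κ − e^{−s} h₄(y) + O(e^{−2s}) uniformly with polynomial weight (1 + y⁸). -/
open Real MeasureTheory Filter

lemma taylor_rpow (β : ℝ) (hβ : 0 < β) :
    ∃ M > (0:ℝ), ∀ x ∈ Set.Icc (1/2 : ℝ) (3/2), |x ^ β - 1 - β * (x - 1)| ≤ M * (x - 1)^2 := by
  set γ : ℝ := β - 1 with hγ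
  set K : ℝ := (1/2 : ℝ) ^ (γ - 1) + (3/2 : ℝ) ^ (γ - 1) with hK
  have hKpos : 0 < K := by positivity
  set L : ℝ := |γ| * K with hL
  have hL0 : 0 ≤ L := by positivity
  -- Step A : Lipschitz bound for t ↦ t ^ γ on [1/2, 3/2]
  have stepA : ∀ t ∈ Set.Icc (1/2 : ℝ) (3/2), |t ^ γ - 1| ≤ L * |t - 1| := by
    intro t ht
    have h1 : (1:ℝ) ∈ Set.Icc (1/2 : ℝ) (3/2) := by constructor <;> norm_num
    have key := Convex.norm_image_sub_le_of_norm_hasDerivWithin_le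
      (f := fun z : ℝ => z ^ γ) (f' := fun z : ℝ => γ * z ^ (γ - 1))
      (s := Set.Icc (1/2 : ℝ) (3/2)) (C := L)
      (fun z hz => (Real.hasDerivAt_rpow_const
        (Or.inl (by rcases hz with ⟨h, _⟩; intro h0; rw [h0] at h; norm_num at h))).hasDerivWithinAt)
      (fun z hz => by
        rcases hz with ⟨hz1, hz2⟩
        have hz0 : (0:ℝ) < z := by linarith
        have hpow : z ^ (γ - 1) ≤ K := by
          rcases le_or_gt (γ - 1) 0 with hc | hc
          · have : z ^ (γ - 1) ≤ (1/2 : ℝ) ^ (γ - 1) :=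
              Real.rpow_le_rpow_of_nonpos (by norm_num) hz1 hc
            have h2 : (0:ℝ) < (3/2 : ℝ) ^ (γ - 1) := by positivity
            rw [hK]; linarith
          · have : z ^ (γ - 1) ≤ (3/2 : ℝ) ^ (γ - 1) :=
              Real.rpow_le_rpow (le_of_lt hz0) hz2 hc.le
            have h2 : (0:ℝ) < (1/2 : ℝ) ^ (γ - 1) := by positivity
            rw [hK]; linarith
        have hzn : 0 ≤ z ^ (γ - 1) := Real.rpow_nonneg hz0.le _
        calc ‖γ * z ^ (γ - 1)‖ = |γ| * z ^ (γ - 1) := by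
              rw [norm_mul, Real.norm_eq_abs, Real.norm_eq_abs, abs_of_nonneg hzn]
          _ ≤ |γ| * K := by gcongr
          _ = L := rfl)
      (convex_Icc _ _) h1 ht
    simpa [Real.one_rpow, Real.norm_eq_abs] using key
  refine ⟨β * L + 1, by positivity, ?_⟩
  intro x hx
  have h1 : (1:ℝ) ∈ Set.Icc (1/2 : ℝ) (3/2) := by constructor <;> norm_num
  have hsub : Set.uIcc (1:ℝ) x ⊆ Set.Icc (1/2 : ℝ) (3/2) := by
    intro z hz
    rcases le_total (1:ℝ) x with hc | hc
    · rw [Set.uIcc_of_le hc] at hz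
      exact ⟨by linarith [hz.1], by linarith [hz.2, hx.2]⟩
    · rw [Set.uIcc_of_ge hc] at hz
      exact ⟨by linarith [hz.1, hx.1], by linarith [hz.2]⟩
  have habs : ∀ z ∈ Set.uIcc (1:ℝ) x, |z - 1| ≤ |x - 1| := by
    intro z hz
    rcases le_total (1:ℝ) x with hc | hc
    · rw [Set.uIcc_of_le hc] at hz
      rw [abs_of_nonneg (by linarith [hz.1]), abs_of_nonneg (by linarith)]
      linarith [hz.2]
    · rw [Set.uIcc_of_ge hc] at hz
      rw [abs_of_nonpos (by linarith [hz.2]), abs_of_nonpos (by linarith)]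
      linarith [hz.1]
  have key := Convex.norm_image_sub_le_of_norm_hasDerivWithin_le
    (f := fun z : ℝ => z ^ β - β * z) (f' := fun z : ℝ => β * z ^ (β - 1) - β)
    (s := Set.uIcc (1:ℝ) x) (C := β * L * |x - 1|)
    (fun z hz => by
      have hz' := hsub hz
      have hz0 : z ≠ 0 := by
        rcases hz' with ⟨h, _⟩; intro h0; rw [h0] at h; norm_num at h
      exact ((Real.hasDerivAt_rpow_const (Or.inl hz0)).sub
        (by simpa using (hasDerivAt_id z).const_mul β)).hasDerivWithinAt)
    (fun z hz => by
      have hz' := hsub hz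
      have hA := stepA z hz'
      have hB := habs z hz
      calc ‖β * z ^ (β - 1) - β‖ = β * |z ^ (β - 1) - 1| := by
            rw [Real.norm_eq_abs, show β * z ^ (β - 1) - β = β * (z ^ (β - 1) - 1) by ring,
              abs_mul, abs_of_pos hβ]
        _ = β * |z ^ γ - 1| := by rw [hγ]
        _ ≤ β * (L * |z - 1|) := by gcongr
        _ ≤ β * (L * |x - 1|) := by gcongr
        _ = β * L * |x - 1| := by ring
    )
    (convex_uIcc _ _) (Set.left_mem_uIcc) (Set.right_mem_uIcc)
  have h1p : (1:ℝ) ^ β = 1 := Real.one_rpow β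
  rw [Real.norm_eq_abs, Real.norm_eq_abs] at key
  have heq : x ^ β - β * x - ((1:ℝ) ^ β - β * 1) = x ^ β - 1 - β * (x - 1) := by
    rw [h1p]; ring
  rw [heq] at key
  calc |x ^ β - 1 - β * (x - 1)| ≤ β * L * |x - 1| * |x - 1| := key
    _ = β * L * (x - 1)^2 := by rw [mul_assoc, ← abs_mul, ← sq, abs_sq]
    _ ≤ (β * L + 1) * (x - 1)^2 := by nlinarith [sq_nonneg (x-1)]
open Real

lemma hm4 (y : ℝ) : hmPoly 4 y = y^4 - 12*y^2 + 12 := by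
  simp [hmPoly, Finset.sum_range_succ, Nat.factorial]
  ring

set_option maxHeartbeats 1000000 in
/-- φ(y,s) = κ − e^{−s} h₄(y) + O(e^{−2s}) with polynomial weight (1 + y⁸). -/
theorem statement5 (p : ℝ) (hp : 1 < p) :
    ∃ C > (0 : ℝ), ∃ s₂ : ℝ, 0 ≤ s₂ ∧ ∀ s ≥ s₂, ∀ y : ℝ,
      |phi p y s - (kappa p - Real.exp (-s) * hmPoly 4 y)|
        ≤ C * (1 + y ^ 8) * Real.exp (-2 * s) := by
  have hp1 : (0:ℝ) < p - 1 := by linarith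
  set β : ℝ := 1 / (p - 1) with hβdef
  have hβ : 0 < β := by positivity
  obtain ⟨M, hM, hTay⟩ := taylor_rpow β hβ
  have hκ : 0 < kappa p := Real.rpow_pos_of_pos hp1 _
  set κ := kappa p with hκdef
  set q : ℝ := (p - 1) / κ with hqdef
  have hq : 0 < q := by positivity
  have hκβq : κ * β * q = 1 := by
    rw [hβdef, hqdef]; field_simp
  set B : ℝ := (7 / (p-1)) ^ β with hBdef
  have hB : 0 < B := Real.rpow_pos_of_pos (by positivity) _
  set C : ℝ := (B + κ + 18) * 784 * q^2 + 196*q + 1000*κ*M*q^2 + 25*q + 1 with hCdef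
  have hC : 0 < C := by positivity
  refine ⟨C, hC, max 0 (Real.log (72 * q)), le_max_left _ _, ?_⟩
  intro s hs y
  have hs0 : 0 ≤ s := le_trans (le_max_left _ _) hs
  set t := Real.exp (-s) with htdef
  have ht : 0 < t := Real.exp_pos _
  have ht1 : t ≤ 1 := by
    rw [htdef, Real.exp_le_one_iff]; linarith
  have ha72 : q * t ≤ 1 / 72 := by
    have h72q : (0:ℝ) < 72 * q := by positivity
    have hsl : Real.log (72 * q) ≤ s := le_trans (le_max_right _ _) hs
    have hti : t ≤ (72*q)⁻¹ := by
      rw [htdef]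
      calc Real.exp (-s) ≤ Real.exp (-(Real.log (72*q))) := Real.exp_le_exp.mpr (by linarith)
        _ = (72*q)⁻¹ := by rw [Real.exp_neg, Real.exp_log h72q]
    have heq : q * (72*q)⁻¹ = 1/72 := by field_simp
    calc q * t ≤ q * (72*q)⁻¹ := by gcongr
      _ = 1/72 := heq
  set a := q * t with hadef
  have ha : 0 < a := by positivity
  set h4 := hmPoly 4 y with hh4def
  have hm4eq : h4 = y^4 - 12*y^2 + 12 := hm4 y
  have hy4 : (0:ℝ) ≤ y^4 := by positivity
  have hy8 : (0:ℝ) ≤ y^8 := by positivity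
  have h4abs : |h4| ≤ 7*y^4 + 18 := by
    rw [hm4eq, abs_le]
    constructor <;> linarith [sq_nonneg (y^2-1), sq_nonneg y, hy4]
  set X : ℝ := 1 + a * y^4 with hXdef
  have hX1 : 1 ≤ X := by
    have := mul_nonneg ha.le hy4
    rw [hXdef]; linarith
  have hX0 : 0 < X := by linarith
  have hκ0 : kappa p ≠ 0 := ne_of_gt hκ
  have hDeq : Dfun p y s = (p-1) * X := by
    simp only [Dfun, hXdef, hadef, hqdef, hκdef, htdef]
    field_simp
  have hEeq : Efun p y s = X - a * h4 := by
    simp only [Efun, Ppoly, hXdef, hadef, hqdef, hκdef, hh4def, htdef]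
    ring
  have hE2 : Efun p y s = 1 + 12*a*y^2 - 12*a := by
    rw [hEeq, hm4eq, hXdef]; ring
  have hEpos : 0 < Efun p y s := by
    rw [hE2]; linarith [mul_nonneg ha.le (sq_nonneg y), ha72]
  have hDpos : 0 < Dfun p y s := by rw [hDeq]; positivity
  have hκinv : κ = ((p-1) ^ β)⁻¹ := by
    rw [hκdef, kappa, ← hβdef, Real.rpow_neg hp1.le]
  have hphi : phi p y s = κ * (Efun p y s / X) ^ β := by
    simp only [phi, ← hβdef, hDeq]
    rw [show Efun p y s / ((p-1)*X) = (Efun p y s / X) / (p-1) by rw [div_div, mul_comm],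
      Real.div_rpow (by positivity) hp1.le, hκinv, div_eq_mul_inv, mul_comm]
  have e2 : Real.exp (-2*s) = t^2 := by
    rw [show (-2:ℝ)*s = (-s) + (-s) by ring, Real.exp_add, htdef, sq]
  rw [e2]
  by_cases hreg : a * y^4 ≤ 1/28
  · -- Taylor regime
    set x := Efun p y s / X with hxdef
    have hx1 : x - 1 = -(a*h4)/X := by
      rw [hxdef, hEeq]; field_simp; ring
    have hxabs : |x - 1| ≤ a * |h4| := by
      rw [hx1, abs_div, abs_neg, abs_mul, abs_of_pos ha, abs_of_pos hX0,
        div_le_iff₀ hX0]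
      linarith [mul_le_mul_of_nonneg_left hX1 (by positivity : (0:ℝ) ≤ a*|h4|)]
    have hxhalf : |x - 1| ≤ 1/2 := by
      have h1 : a * |h4| ≤ a * (7*y^4+18) := by gcongr
      linarith
    have hxIcc : x ∈ Set.Icc (1/2:ℝ) (3/2) := by
      rw [abs_le] at hxhalf
      exact ⟨by linarith [hxhalf.1], by linarith [hxhalf.2]⟩
    have hT := hTay x hxIcc
    have hdecomp : phi p y s - (κ - t * h4) =
        κ * (x ^ β - 1 - β*(x-1)) + t * h4 * (a * y^4) / X := by
      rw [hphi]
      have hκβa : κ * β * a = t := by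
        rw [hadef, show κ*β*(q*t) = (κ*β*q)*t from by ring, hκβq, one_mul]
      have hx1' : (x - 1) * X = -(a * h4) := by
        rw [hx1]; exact div_mul_cancel₀ _ hX0.ne'
      have h2 : κ * β * (x - 1) + t * h4 = t * h4 * (a * y^4) / X := by
        rw [eq_div_iff hX0.ne']
        calc (κ*β*(x-1) + t*h4)*X = κ*β*((x-1)*X) + t*h4*X := by ring
          _ = κ*β*(-(a*h4)) + t*h4*X := by rw [hx1']
          _ = -(κ*β*a)*h4 + t*h4*X := by ring
          _ = -t*h4 + t*h4*X := by rw [hκβa]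
          _ = t*h4*(a*y^4) := by rw [hXdef]; ring
      linear_combination h2
    rw [hdecomp]
    have hsq : (x-1)^2 ≤ a^2 * h4^2 := by
      have hmm : |x - 1| * |x - 1| ≤ (a * |h4|) * (a * |h4|) :=
        mul_le_mul hxabs hxabs (abs_nonneg _) (by positivity)
      have e1 : |x - 1| * |x - 1| = (x-1)^2 := by rw [abs_mul_abs_self, sq]
      have e3 : (a * |h4|) * (a * |h4|) = a^2*h4^2 := by
        rw [show (a * |h4|) * (a * |h4|) = a^2 * (|h4| * |h4|) by ring, abs_mul_abs_self]; ring
      linarith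
    have hb1 : |x ^ β - 1 - β*(x-1)| ≤ M * (a^2 * h4^2) := by
      calc |x ^ β - 1 - β*(x-1)| ≤ M * (x-1)^2 := hT
        _ ≤ M * (a^2 * h4^2) := by gcongr
    have hb2 : |t * h4 * (a * y^4) / X| ≤ t * (a * (|h4| * y^4)) := by
      rw [abs_div, abs_of_pos hX0]
      have heq : |t * h4 * (a * y^4)| = t * (a * (|h4| * y^4)) := by
        rw [abs_mul, abs_mul, abs_mul, abs_of_pos ht, abs_of_pos ha,
          abs_of_nonneg hy4]; ring
      rw [heq]
      exact div_le_self (by positivity) hX1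
    have h4sq : h4^2 ≤ 1000*(1+y^8) := by
      have hmm : |h4| * |h4| ≤ (7*y^4+18) * (7*y^4+18) :=
        mul_le_mul h4abs h4abs (abs_nonneg _) (by positivity)
      rw [abs_mul_abs_self, ← sq] at hmm
      linarith [sq_nonneg (y^4-1)]
    have h4y4 : |h4| * y^4 ≤ 25*(1+y^8) := by
      linarith [mul_le_mul_of_nonneg_right h4abs hy4, sq_nonneg (y^4-1)]
    calc |κ * (x ^ β - 1 - β*(x-1)) + t * h4 * (a * y^4) / X|
        ≤ κ * |x ^ β - 1 - β*(x-1)| + |t * h4 * (a * y^4) / X| := by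
          refine (abs_add_le _ _).trans ?_
          rw [abs_mul, abs_of_pos hκ]
      _ ≤ κ * (M * (a^2 * h4^2)) + t * (a * (|h4| * y^4)) := by gcongr
      _ = (κ * M * q^2 * h4^2) * t^2 + (q * (|h4| * y^4)) * t^2 := by
          rw [hadef]; ring
      _ ≤ (κ * M * q^2 * (1000*(1+y^8))) * t^2 + (q * (25*(1+y^8))) * t^2 := by gcongr
      _ = (1000*κ*M*q^2 + 25*q) * ((1+y^8) * t^2) := by ring
      _ ≤ C * ((1+y^8) * t^2) := by
          gcongr
          have h0 : (0:ℝ) ≤ (B + κ + 18) * 784 * q^2 + 196*q := by positivity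
          rw [hCdef]; linarith
      _ = C * (1+y^8) * t^2 := by ring
  · push_neg at hreg
    have h28 : 1 ≤ 28 * (a * y^4) := by linarith
    have hEX : Efun p y s ≤ 7 * X := by
      rw [hE2, hXdef]
      linarith [mul_nonneg ha.le (sq_nonneg (y^2-1)), mul_nonneg ha.le hy4, ha.le]
    have hED : Efun p y s / Dfun p y s ≤ 7/(p-1) := by
      rw [hDeq, div_le_div_iff₀ (by positivity) hp1]
      linarith [mul_le_mul_of_nonneg_right hEX hp1.le]
    have hphiB : phi p y s ≤ B := by
      rw [phi, ← hβdef, hBdef]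
      exact Real.rpow_le_rpow (by positivity) hED hβ.le
    have hphi0 : 0 ≤ phi p y s := by
      rw [phi]; positivity
    have habs2 : |phi p y s - (κ - t*h4)| ≤ B + κ + t*(7*y^4+18) := by
      have h1 : |t*h4| ≤ t*(7*y^4+18) := by
        rw [abs_mul, abs_of_pos ht]; gcongr
      have h2 := abs_sub (phi p y s) (κ - t*h4)
      have h3 := abs_sub κ (t*h4)
      rw [abs_of_nonneg hphi0] at h2
      rw [abs_of_pos hκ] at h3
      linarith
    have f1 : 1 ≤ 784*(q^2*t^2*y^8) := by
      have hmm := mul_le_mul h28 h28 (by norm_num) (by positivity)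
      rw [hadef] at hmm
      linarith [hmm]
    have hc1 : B + κ ≤ (B+κ)*(784*(q^2*t^2*y^8)) := by
      linarith [mul_le_mul_of_nonneg_left f1 (by positivity : (0:ℝ) ≤ B + κ)]
    have hc2 : 18*t ≤ 18*(784*(q^2*t^2*y^8)) := by
      linarith [f1, ht1]
    have hc3 : 7*t*y^4 ≤ 196*(q*t^2*y^8) := by
      have hmm := mul_le_mul_of_nonneg_left h28 (by positivity : (0:ℝ) ≤ 7*t*y^4)
      rw [hadef] at hmm
      linarith [hmm]
    calc |phi p y s - (κ - t*h4)| ≤ B + κ + t*(7*y^4+18) := habs2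
      _ ≤ ((B+κ+18)*784*q^2 + 196*q) * (t^2*y^8) := by linarith [hc1, hc2, hc3]
      _ ≤ C * ((1+y^8)*t^2) := by
          have hle : ((B+κ+18)*784*q^2 + 196*q) ≤ C := by
            have h0 : (0:ℝ) ≤ 1000*κ*M*q^2 + 25*q := by positivity
            rw [hCdef]; linarith
          have hyt : t^2*y^8 ≤ (1+y^8)*t^2 := by
            have h0 : (0:ℝ) ≤ t^2 := sq_nonneg t
            linarith [mul_nonneg h0 hy8]
          exact mul_le_mul hle hyt (by positivity) hC.le
      _ = C * (1+y^8) * t^2 := by ring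
end

section
/- There exists s₂ ≥ 0, depending only on p, such that for all s ≥ s₂ and all y ∈ ℝ, |V(y,s)| ≤ p/(p−1), where V(y,s) = p φ(y,s)^{p−1} − p/(p−1). -/
open Real MeasureTheory Filter

/-- The potential V(y,s) = p φ(y,s)^{p−1} − p/(p−1). -/
noncomputable def Vfun (p y s : ℝ) : ℝ := p * phi p y s ^ (p - 1) - p / (p - 1)

/-- for s large enough, |V(y,s)| ≤ p/(p−1). -/
theorem statement7 (p : ℝ) (hp : 1 < p) :
    ∃ s₂ : ℝ, 0 ≤ s₂ ∧ ∀ s ≥ s₂, ∀ y : ℝ, |Vfun p y s| ≤ p / (p - 1) := by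
  have hp1 : (0:ℝ) < p - 1 := by linarith
  have hk : 0 < kappa p := Real.rpow_pos_of_pos hp1 _
  set k := kappa p with hkdef
  set M : ℝ := 12 * (p - 1) / k with hMdef
  have hM : 0 < M := by positivity
  refine ⟨max 0 (Real.log M), le_max_left _ _, ?_⟩
  intro s hs y
  set a := Real.exp (-s) with hadef
  have ha : 0 < a := Real.exp_pos _
  have haM : a ≤ 1 / M := by
    have h1 : -s ≤ -Real.log M := by
      have := le_trans (le_max_right 0 (Real.log M)) hs
      linarith
    calc a ≤ Real.exp (-Real.log M) := Real.exp_le_exp.2 h1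
      _ = 1 / M := by rw [Real.exp_neg, Real.exp_log hM, one_div]
  set b : ℝ := a * (p - 1) / k with hbdef
  have hb : 0 ≤ b := by positivity
  have hb12 : 12 * b ≤ 1 := by
    have h1 : 12 * b = a * M := by rw [hbdef, hMdef]; ring
    have h2 : a * M ≤ (1 / M) * M := mul_le_mul_of_nonneg_right haM hM.le
    have h3 : (1 / M) * M = 1 := by field_simp
    linarith
  have hEeq : Efun p y s = 1 + 12 * b * (y ^ 2 - 1) := by
    unfold Efun Ppoly hmPoly
    rw [hbdef]
    norm_num [Finset.sum_range_succ, Nat.factorial]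
    field_simp
    have hkk : k * k⁻¹ = 1 := mul_inv_cancel₀ hk.ne'
    rw [← hkdef, ← hadef]; linear_combination (12 * a * y ^ 2 - 12 * a) * hkk
  have hDeq : Dfun p y s = (p - 1) * (1 + b * y ^ 4) := by
    unfold Dfun
    rw [hbdef]
    field_simp
    have hkk : k * k⁻¹ = 1 := mul_inv_cancel₀ hk.ne'
    rw [← hkdef, ← hadef]; linear_combination (p * y ^ 4 * a - y ^ 4 * a) * hkk
  have hE0 : 0 ≤ Efun p y s := by
    rw [hEeq]
    nlinarith [mul_nonneg hb (sq_nonneg y)]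
  have hD0 : 0 < Dfun p y s := by
    rw [hDeq]
    have : 0 ≤ b * y ^ 4 := by positivity
    nlinarith
  have hED : Efun p y s ≤ (2 / (p - 1)) * Dfun p y s := by
    have h2D : (2 / (p - 1)) * Dfun p y s = 2 + 2 * b * y ^ 4 := by
      rw [hDeq]; field_simp
    rw [hEeq, h2D]
    nlinarith [mul_nonneg hb (sq_nonneg (y ^ 2 - 3))]
  set r : ℝ := Efun p y s / Dfun p y s with hrdef
  have hr0 : 0 ≤ r := div_nonneg hE0 hD0.le
  have hr2 : r ≤ 2 / (p - 1) := (div_le_iff₀ hD0).2 (by linarith)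
  have hphi : phi p y s ^ (p - 1) = r := by
    unfold phi
    rw [← hrdef, ← Real.rpow_mul hr0, one_div, inv_mul_cancel₀ hp1.ne', Real.rpow_one]
  have hV : Vfun p y s = p * r - p / (p - 1) := by
    unfold Vfun; rw [hphi]
  have hppos : (0:ℝ) < p := by linarith
  have hpr : p * r ≤ p * (2 / (p - 1)) := mul_le_mul_of_nonneg_left hr2 hppos.le
  have heq : p * (2 / (p - 1)) = 2 * (p / (p - 1)) := by ring
  have hpr0 : 0 ≤ p * r := mul_nonneg hppos.le hr0
  rw [hV, abs_le]
  constructor <;> nlinarith [hpr, heq, hpr0]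
end

section
/- For all natural numbers m and n, ∫_ℝ h_m(y) h_n(y) ρ₁(y) dy = 2^n · n! if m = n, and = 0 if m ≠ n. -/
open Real MeasureTheory Filter

namespace Statement11Aux
open Polynomial MeasureTheory

noncomputable def w (x : ℝ) : ℝ := Real.exp (-(x ^ 2) / 4)

lemma intpow (n : ℕ) : Integrable fun x : ℝ => x ^ n * w x := by
  have h : Integrable fun x : ℝ => x ^ ((n : ℝ)) * Real.exp (-(4⁻¹ : ℝ) * x ^ 2) :=
    integrable_rpow_mul_exp_neg_mul_sq (by norm_num) (by linarith [Nat.cast_nonneg (α:=ℝ) n])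
  have : ∀ x : ℝ, -(4⁻¹ : ℝ) * x ^ 2 = -(x ^ 2) / 4 := fun x => by ring
  simpa [w, Real.rpow_natCast, this] using h

lemma intg (q : Polynomial ℝ) : Integrable fun x : ℝ => eval x q * w x := by
  have : ∀ x : ℝ, eval x q * w x
      = ∑ i ∈ Finset.range (q.natDegree + 1), q.coeff i * (x ^ i * w x) := by
    intro x
    rw [eval_eq_sum_range, Finset.sum_mul]
    exact Finset.sum_congr rfl fun i _ => by ring
  simp_rw [this]
  exact integrable_finset_sum _ fun i _ => (intpow i).const_mul _

lemma wDeriv (x : ℝ) : HasDerivAt w (-(x / 2) * w x) x := by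
  have h1 : HasDerivAt (fun x : ℝ => -(x ^ 2) / 4) (-(x / 2)) x := by
    have := ((hasDerivAt_pow 2 x).neg.div_const 4)
    exact this.congr_deriv (by rw [show (2:ℕ) - 1 = 1 from rfl, pow_one]; push_cast; ring)
  have := h1.exp
  exact this.congr_deriv (by unfold w; ring)

lemma stein (q : Polynomial ℝ) :
    ∫ x : ℝ, eval x (X * q) * w x = 2 * ∫ x : ℝ, eval x (derivative q) * w x := by
  have hderiv : ∀ x : ℝ, HasDerivAt (fun x => eval x q * w x)
      (eval x (derivative q - C 2⁻¹ * (X * q)) * w x) x := by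
    intro x
    have := (q.hasDerivAt x).mul (wDeriv x)
    exact this.congr_deriv (by simp [w]; ring)
  have key := integral_eq_zero_of_hasDerivAt_of_integrable hderiv
    (intg (derivative q - C 2⁻¹ * (X * q))) (intg q)
  have expand : ∀ x : ℝ, eval x (derivative q - C 2⁻¹ * (X * q)) * w x
      = eval x (derivative q) * w x - 2⁻¹ * (eval x (X * q) * w x) := by
    intro x; simp; ring
  simp_rw [expand] at key
  rw [integral_sub (intg _) ((intg (X * q)).const_mul _), MeasureTheory.integral_const_mul] at key
  linarith

noncomputable def P : ℕ → Polynomial ℝ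
  | 0 => 1
  | n + 1 => X * P n - C 2 * derivative (P n)

lemma derivP : ∀ n : ℕ, derivative (P (n + 1)) = C ((n : ℝ) + 1) * P n
  | 0 => by simp [P]
  | m + 1 => by
    have h : P (m + 2) = X * P (m + 1) - C 2 * derivative (P (m + 1)) := rfl
    rw [h, derivative_sub, derivative_mul, derivative_X, derivative_mul, derivative_C,
      derivP m, derivative_mul, derivative_C]
    have h2 : P (m + 1) = X * P m - C 2 * derivative (P m) := rfl
    rw [h2]
    push_cast
    have : P (m+1) = X * P m - C 2 * derivative (P m) := rfl
    simp only [C_add, C_1]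
    ring

lemma int_sub_smul (a b : Polynomial ℝ) (c : ℝ) :
    ∫ x : ℝ, eval x (a - C c * b) * w x
      = (∫ x : ℝ, eval x a * w x) - c * ∫ x : ℝ, eval x b * w x := by
  have : ∀ x : ℝ, eval x (a - C c * b) * w x
      = eval x a * w x - c * (eval x b * w x) := by intro x; simp; ring
  simp_rw [this]
  rw [integral_sub (intg a) ((intg b).const_mul c), MeasureTheory.integral_const_mul]

noncomputable def J (m n : ℕ) : ℝ := ∫ x : ℝ, eval x (P m * P n) * w x

lemma Jstep (m n : ℕ) :
    J m (n + 1) = 2 * ∫ x : ℝ, eval x (derivative (P m) * P n) * w x := by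
  have h : P m * P (n + 1) = X * (P m * P n) - C 2 * (P m * derivative (P n)) := by
    have : P (n + 1) = X * P n - C 2 * derivative (P n) := rfl
    rw [this]; ring
  rw [J, h, int_sub_smul, stein, derivative_mul]
  have : ∀ x : ℝ, eval x (derivative (P m) * P n + P m * derivative (P n)) * w x
      = eval x (derivative (P m) * P n) * w x + eval x (P m * derivative (P n)) * w x := by
    intro x; simp; ring
  simp_rw [this]
  rw [integral_add (intg _) (intg _)]
  ring

lemma Jbase : ∀ m : ℕ, J m 0 = if m = 0 then Real.sqrt (4 * Real.pi) else 0 := by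
  intro m
  match m with
  | 0 =>
    rw [if_pos rfl]
    simp only [J, P, mul_one]
    have : ∀ x : ℝ, eval x (1 : Polynomial ℝ) * w x = Real.exp (-(4⁻¹ : ℝ) * x ^ 2) := by
      intro x; simp [w]; ring_nf
    simp_rw [this]
    rw [integral_gaussian]
    rw [show Real.pi / 4⁻¹ = 4 * Real.pi by ring]
  | k + 1 =>
    rw [if_neg (Nat.succ_ne_zero k)]
    have h : P (k + 1) * P 0 = X * P k - C 2 * derivative (P k) := by
      rw [show P 0 = (1 : Polynomial ℝ) from rfl, mul_one]; rfl
    rw [J, h, int_sub_smul, stein]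
    ring

lemma int_cmul (b : Polynomial ℝ) (c : ℝ) :
    ∫ x : ℝ, eval x (C c * b) * w x = c * ∫ x : ℝ, eval x b * w x := by
  have : ∀ x : ℝ, eval x (C c * b) * w x = c * (eval x b * w x) := by
    intro x; simp; ring
  simp_rw [this, MeasureTheory.integral_const_mul]

lemma Jmain : ∀ n m : ℕ,
    J m n = (if m = n then (2 : ℝ) ^ n * (Nat.factorial n : ℝ) else 0) * Real.sqrt (4 * Real.pi) := by
  intro n
  induction n with
  | zero =>
    intro m
    rw [Jbase m]
    match m with
    | 0 => simp
    | k + 1 => simp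
  | succ n ih =>
    intro m
    match m with
    | 0 =>
      rw [Jstep, show derivative (P 0) = 0 by simp [P]]
      simp [Nat.succ_ne_zero]
    | k + 1 =>
      rw [Jstep, derivP k, mul_assoc, int_cmul, ← J, ih k]
      by_cases h : k = n
      · subst h
        rw [if_pos rfl, if_pos rfl]
        rw [Nat.factorial_succ]
        push_cast
        ring
      · rw [if_neg h, if_neg (by omega)]
        ring

noncomputable def cc (m i : ℕ) : ℝ :=
  ((Nat.factorial m : ℝ) / ((Nat.factorial i : ℝ) * (Nat.factorial (m - 2 * i) : ℝ)))
    * (-1 : ℝ) ^ i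

lemma cc_zero (m : ℕ) : cc m 0 = 1 := by
  simp only [cc, Nat.factorial_zero, Nat.mul_zero, Nat.sub_zero, Nat.cast_one, one_mul,
    pow_zero, mul_one]
  rw [div_self (Nat.cast_ne_zero.2 (Nat.factorial_ne_zero m))]

noncomputable def S (m : ℕ) (y : ℝ) : ℝ :=
  ∑ i ∈ Finset.range (m + 1), if 2 * i ≤ m then cc m i * y ^ (m - 2 * i) else 0

lemma fact_ne (i : ℕ) : (Nat.factorial i : ℝ) ≠ 0 := Nat.cast_ne_zero.2 (Nat.factorial_ne_zero i)

lemma key2 (k i : ℕ) (y : ℝ) :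
    (if 2 * i ≤ k + 2 then cc (k + 2) i * y ^ (k + 2 - 2 * i) else 0)
      = y * (if 2 * i ≤ k + 1 then cc (k + 1) i * y ^ (k + 1 - 2 * i) else 0)
        - (if 1 ≤ i ∧ 2 * i ≤ k + 2 then 2 * ((k : ℝ) + 1) * cc k (i - 1) * y ^ (k + 2 - 2 * i) else 0) := by
  match i with
  | 0 =>
    rw [if_pos (by omega), if_pos (by omega), if_neg (by omega)]
    rw [cc_zero, cc_zero, Nat.sub_zero, Nat.sub_zero, one_mul, one_mul,
      show k + 2 = (k + 1) + 1 from rfl, pow_succ]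
    ring
  | i + 1 =>
    rcases lt_trichotomy (2 * i) k with h | h | h
    · rw [if_pos (by omega), if_pos (by omega), if_pos (by omega)]
      obtain ⟨j, rfl⟩ : ∃ j, k = 2 * i + 1 + j := ⟨k - (2 * i + 1), by omega⟩
      simp only [cc, Nat.add_sub_cancel]
      rw [show 2 * i + 1 + j + 2 - 2 * (i + 1) = j + 1 by omega,
          show 2 * i + 1 + j + 1 - 2 * (i + 1) = j by omega,
          show 2 * i + 1 + j - 2 * i = j + 1 by omega]
      rw [show 2 * i + 1 + j + 2 = (2 * i + 1 + j + 1) + 1 from rfl]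
      rw [Nat.factorial_succ (2 * i + 1 + j + 1), Nat.factorial_succ (2 * i + 1 + j),
          Nat.factorial_succ i, Nat.factorial_succ j]
      push_cast
      field_simp
      ring
    · rw [if_pos (by omega), if_neg (by omega), if_pos (by omega)]
      obtain rfl : k = 2 * i := by omega
      simp only [cc, Nat.add_sub_cancel]
      rw [show 2 * i + 2 - 2 * (i + 1) = 0 by omega, show 2 * i - 2 * i = 0 by omega]
      rw [show 2 * i + 2 = (2 * i + 1) + 1 from rfl]
      rw [Nat.factorial_succ (2 * i + 1), Nat.factorial_succ (2 * i), Nat.factorial_succ i,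
        Nat.factorial_zero]
      push_cast
      field_simp
      ring
    · rw [if_neg (by omega), if_neg (by omega), if_neg (by omega)]
      ring

lemma S_rec (k : ℕ) (y : ℝ) :
    S (k + 2) y = y * S (k + 1) y - 2 * ((k : ℝ) + 1) * S k y := by
  have hB : y * S (k + 1) y
      = ∑ i ∈ Finset.range (k + 3),
          y * (if 2 * i ≤ k + 1 then cc (k + 1) i * y ^ (k + 1 - 2 * i) else 0) := by
    rw [show k + 3 = (k + 2) + 1 from rfl, Finset.sum_range_succ, if_neg (by omega), mul_zero,
      add_zero, S, Finset.mul_sum]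
  have hD : 2 * ((k : ℝ) + 1) * S k y
      = ∑ i ∈ Finset.range (k + 3),
          (if 1 ≤ i ∧ 2 * i ≤ k + 2 then 2 * ((k : ℝ) + 1) * cc k (i - 1) * y ^ (k + 2 - 2 * i) else 0) := by
    rw [show k + 3 = (k + 2) + 1 from rfl, Finset.sum_range_succ']
    rw [if_neg (by omega), add_zero]
    have : ∀ i ∈ Finset.range (k + 2),
        (if 1 ≤ i + 1 ∧ 2 * (i + 1) ≤ k + 2 then
            2 * ((k : ℝ) + 1) * cc k (i + 1 - 1) * y ^ (k + 2 - 2 * (i + 1)) else 0)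
        = (if 2 * i ≤ k then 2 * ((k : ℝ) + 1) * (cc k i * y ^ (k - 2 * i)) else 0) := by
      intro i _
      by_cases h : 2 * i ≤ k
      · rw [if_pos (by omega), if_pos h, Nat.add_sub_cancel,
          show k + 2 - 2 * (i + 1) = k - 2 * i by omega]
        ring
      · rw [if_neg (by omega), if_neg h]
    rw [Finset.sum_congr rfl this]
    rw [show k + 2 = (k + 1) + 1 from rfl, Finset.sum_range_succ, if_neg (by omega), add_zero,
      S, Finset.mul_sum]
    simp [mul_ite, mul_zero]
  rw [hB, hD, ← Finset.sum_sub_distrib, S]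
  exact Finset.sum_congr rfl fun i _ => key2 k i y

lemma P_rec (k : ℕ) (y : ℝ) :
    eval y (P (k + 2)) = y * eval y (P (k + 1)) - 2 * ((k : ℝ) + 1) * eval y (P k) := by
  rw [show P (k + 2) = X * P (k + 1) - C 2 * derivative (P (k + 1)) from rfl, derivP k]
  simp
  ring

lemma S_eq : ∀ m : ℕ, ∀ y : ℝ, S m y = eval y (P m)
  | 0, y => by
    simp [S, P, cc_zero]
  | 1, y => by
    have h1 : P 1 = X := by
      rw [show P 1 = X * P 0 - C 2 * derivative (P 0) from rfl,
        show P 0 = (1 : Polynomial ℝ) from rfl]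
      simp
    rw [h1, S, Finset.sum_range_succ, Finset.sum_range_succ, Finset.sum_range_zero,
      if_pos (by omega), if_neg (by omega), cc_zero]
    simp
  | (k + 2), y => by
    rw [S_rec, S_eq (k + 1) y, S_eq k y, P_rec]

lemma hm_eq (m : ℕ) (y : ℝ) : hmPoly m y = eval y (P m) := by
  rw [← S_eq m y, hmPoly, S]
  simp only [cc]
  rw [← Finset.sum_filter]
  apply Finset.sum_congr _ (fun _ _ => rfl)
  ext i
  simp only [Finset.mem_filter, Finset.mem_range]
  omega

end Statement11Aux

/-- orthogonality of the rescaled Hermite polynomials,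
∫ h_m h_n ρ₁ = 2^n n! δ_{mn}. -/
theorem statement11 (m n : ℕ) :
    ∫ y : ℝ, hmPoly m y * hmPoly n y * rho1 y
      = if m = n then (2 : ℝ) ^ n * (Nat.factorial n : ℝ) else 0 := by
  open Statement11Aux in
  have hrho : ∀ y : ℝ, rho1 y = w y * (Real.sqrt (4 * Real.pi))⁻¹ := by
    intro y
    rw [rho1, w, div_eq_mul_inv]
  have hcalc : ∀ y : ℝ, hmPoly m y * hmPoly n y * rho1 y
      = Polynomial.eval y (P m * P n) * w y * (Real.sqrt (4 * Real.pi))⁻¹ := by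
    intro y
    rw [hrho, hm_eq, hm_eq, Polynomial.eval_mul]
    ring
  simp_rw [hcalc]
  rw [MeasureTheory.integral_mul_const, ← J, Jmain]
  have hs : Real.sqrt (4 * Real.pi) ≠ 0 := by
    positivity
  field_simp
end

section
/- Let d ≥ 2 be an integer and ε₀ ∈ (0,1), and let χ : ℝ → [0,1] be a C¹ cut-off with χ = 0 on (−∞, 1/8], χ = 1 on [1/4, ∞) and ‖χ'‖_∞ ≤ K_χ. There exist C > 0 and s₁ ≥ 1 (depending only on d, p, ε₀, K_χ) such that for every s ≥ s₁ and every measurable f : ℝ → ℝ with |f(y)| ≤ 2κ for all y, the function N(y,s) = ((d−1)/(y e^{−s/2} + 1)) · f(y) · (e^{−s/2}/ε₀) · χ'((y e^{−s/2} + 1)/ε₀) for y > −e^{s/2} (and N(y,s) = 0 for y ≤ −e^{s/2}) satisfies ‖N(·,s)‖_{L²_{ρ₁}} ≤ C e^{−3s} and, for every m ≤ 6, |∫_ℝ N(y,s) h_m(y) ρ₁(y) dy| ≤ C e^{−3s}. -/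
open Real MeasureTheory Filter

/-- A deriv of a C¹ cutoff that is constant off [1/8,1/4] vanishes off [1/8,1/4]. -/
lemma deriv_loc18 (χ : ℝ → ℝ) (hχ0 : ∀ x ≤ (1/8:ℝ), χ x = 0)
    (hχ1 : ∀ x ≥ (1/4:ℝ), χ x = 1) {x : ℝ} (hx : deriv χ x ≠ 0) :
    1/8 ≤ x ∧ x ≤ 1/4 := by
  constructor
  · by_contra h
    push_neg at h
    apply hx
    have he : χ =ᶠ[nhds x] fun _ => (0:ℝ) := by
      filter_upwards [Iio_mem_nhds h] with z hz
      exact hχ0 z hz.le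
    rw [he.deriv_eq]; exact deriv_const x 0
  · by_contra h
    push_neg at h
    apply hx
    have he : χ =ᶠ[nhds x] fun _ => (1:ℝ) := by
      filter_upwards [Ioi_mem_nhds h] with z hz
      exact hχ1 z hz.le
    rw [he.deriv_eq]; exact deriv_const x 1

lemma gauss_int_val18 : ∫ y : ℝ, Real.exp (-(1/16) * y^2) = 2 * Real.sqrt (4 * Real.pi) := by
  rw [integral_gaussian]
  rw [show Real.pi / (1/16) = 4 * (4*Real.pi) by ring, Real.sqrt_mul (by norm_num : (0:ℝ) ≤ 4),
    show Real.sqrt 4 = 2 by rw [show (4:ℝ) = 2^2 by norm_num, Real.sqrt_sq (by norm_num : (0:ℝ) ≤ 2)]]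

lemma hm_bound18 {m : ℕ} (hm : m ≤ 6) (y : ℝ) :
    |hmPoly m y| ≤ 2880 * (13824 * Real.exp (y^2/8)) := by
  have hexp : 1 + y^6 ≤ 13824 * Real.exp (y^2/8) := by
    have h1 : 1 + y^2/24 ≤ Real.exp (y^2/24) := by
      have := Real.add_one_le_exp (y^2/24); linarith
    have h2 : (1 + y^2/24)^3 ≤ Real.exp (y^2/24)^3 :=
      pow_le_pow_left₀ (by positivity) h1 3
    have h3 : Real.exp (y^2/8) = Real.exp (y^2/24) * Real.exp (y^2/24) * Real.exp (y^2/24) := by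
      rw [← Real.exp_add, ← Real.exp_add]; ring_nf
    nlinarith [sq_nonneg y, sq_nonneg (y^2)]
  have h6 : ∀ k : ℕ, k ≤ 6 → |y|^k ≤ 1 + y^6 := by
    intro k hk
    rcases le_or_gt (|y|) 1 with h | h
    · have := pow_le_one₀ (abs_nonneg y) h (n := k)
      nlinarith [pow_nonneg (sq_nonneg y) 3]
    · have h1 : |y|^k ≤ |y|^6 := pow_le_pow_right₀ h.le hk
      have h2 : |y|^6 = y^6 := by
        rw [← abs_pow, abs_of_nonneg]; positivity
      nlinarith
  have hterm : ∀ i ∈ Finset.range (m / 2 + 1),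
      |((Nat.factorial m : ℝ) / ((Nat.factorial i : ℝ) * (Nat.factorial (m - 2 * i) : ℝ)))
        * (-1 : ℝ) ^ i * y ^ (m - 2 * i)| ≤ 720 * (1 + y^6) := by
    intro i _
    rw [abs_mul, abs_mul, abs_pow, abs_neg, abs_one, one_pow, mul_one, abs_pow]
    have hfrac : |((Nat.factorial m : ℝ) / ((Nat.factorial i : ℝ) * (Nat.factorial (m - 2 * i) : ℝ)))| ≤ 720 := by
      rw [abs_of_nonneg (by positivity)]
      have hnum : (Nat.factorial m : ℝ) ≤ 720 := by
        have h1 : Nat.factorial m ≤ 720 := by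
          calc Nat.factorial m ≤ Nat.factorial 6 := Nat.factorial_le hm
            _ = 720 := by norm_num [Nat.factorial]
        exact_mod_cast h1
      have hden : (1:ℝ) ≤ (Nat.factorial i : ℝ) * (Nat.factorial (m - 2 * i) : ℝ) := by
        have h1 : (1:ℝ) ≤ (Nat.factorial i : ℝ) := by
          exact_mod_cast Nat.one_le_iff_ne_zero.mpr (Nat.factorial_ne_zero i)
        have h2 : (1:ℝ) ≤ (Nat.factorial (m - 2*i) : ℝ) := by
          exact_mod_cast Nat.one_le_iff_ne_zero.mpr (Nat.factorial_ne_zero _)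
        nlinarith
      calc (Nat.factorial m : ℝ) / ((Nat.factorial i : ℝ) * (Nat.factorial (m - 2 * i) : ℝ))
          ≤ (Nat.factorial m : ℝ) / 1 :=
            div_le_div_of_nonneg_left (by positivity) (by norm_num) hden
        _ ≤ 720 := by simpa using hnum
    have hy : |y| ^ (m - 2*i) ≤ 1 + y^6 := h6 _ (by omega)
    exact mul_le_mul hfrac hy (by positivity) (by norm_num)
  calc |hmPoly m y|
      ≤ ∑ i ∈ Finset.range (m / 2 + 1),
        |((Nat.factorial m : ℝ) / ((Nat.factorial i : ℝ) * (Nat.factorial (m - 2 * i) : ℝ)))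
          * (-1 : ℝ) ^ i * y ^ (m - 2 * i)| := Finset.abs_sum_le_sum_abs _ _
    _ ≤ ∑ _i ∈ Finset.range (m / 2 + 1), 720 * (1 + y^6) := Finset.sum_le_sum hterm
    _ = (m/2 + 1 : ℕ) * (720 * (1 + y^6)) := by
        rw [Finset.sum_const, Finset.card_range, nsmul_eq_mul]
    _ ≤ 4 * (720 * (1 + y^6)) := by
        have hc : ((m/2 + 1 : ℕ) : ℝ) ≤ 4 := by exact_mod_cast (by omega : m/2 + 1 ≤ 4)
        have h0 : (0:ℝ) ≤ 720 * (1 + y^6) := by positivity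
        exact mul_le_mul_of_nonneg_right hc h0
    _ ≤ 2880 * (13824 * Real.exp (y^2/8)) := by nlinarith [hexp]

set_option maxHeartbeats 1000000 in
/-- smallness of the cut-off term
N(y,s) = ((d−1)/(y e^{−s/2} + 1)) f(y) (e^{−s/2}/ε₀) χ'((y e^{−s/2} + 1)/ε₀)
in L²_{ρ₁} and of its projections on h_m, m ≤ 6. -/
theorem statement18 (d : ℕ) (hd : 2 ≤ d) (p : ℝ) (hp : 1 < p)
    (ε₀ : ℝ) (hε₀ : ε₀ ∈ Set.Ioo (0 : ℝ) 1)
    (χ : ℝ → ℝ) (Kχ : ℝ)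
    (hχsm : ContDiff ℝ 1 χ) (hχrange : ∀ x, χ x ∈ Set.Icc (0 : ℝ) 1)
    (hχ0 : ∀ x ≤ (1 / 8 : ℝ), χ x = 0) (hχ1 : ∀ x ≥ (1 / 4 : ℝ), χ x = 1)
    (hχ' : ∀ x, |deriv χ x| ≤ Kχ) :
    ∃ C > (0 : ℝ), ∃ s₁ ≥ (1 : ℝ), ∀ s ≥ s₁, ∀ f : ℝ → ℝ, Measurable f →
      (∀ y, |f y| ≤ 2 * kappa p) →
      ∀ N : ℝ → ℝ,
        (∀ y, -Real.exp (s / 2) < y →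
          N y = ((d : ℝ) - 1) / (y * Real.exp (-s / 2) + 1) * f y
            * (Real.exp (-s / 2) / ε₀) * deriv χ ((y * Real.exp (-s / 2) + 1) / ε₀)) →
        (∀ y, y ≤ -Real.exp (s / 2) → N y = 0) →
        LrhoNorm 2 N ≤ C * Real.exp (-3 * s) ∧
        ∀ m : ℕ, m ≤ 6 →
          |∫ y : ℝ, N y * hmPoly m y * rho1 y| ≤ C * Real.exp (-3 * s) := by
  obtain ⟨hε₀0, hε₀1⟩ := hε₀
  have hκ : 0 < kappa p := Real.rpow_pos_of_pos (by linarith) _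
  have hKχ : 0 ≤ Kχ := le_trans (abs_nonneg _) (hχ' 0)
  have hd1 : (0:ℝ) ≤ (d:ℝ) - 1 := by
    have : (2:ℝ) ≤ (d:ℝ) := by exact_mod_cast hd
    linarith
  set M : ℝ := ((d:ℝ) - 1) * (8/ε₀) * (2 * kappa p) * ((1/ε₀) * Kχ) with hMdef
  have hM0 : 0 ≤ M := by
    apply mul_nonneg (mul_nonneg (mul_nonneg hd1 (by positivity)) (by positivity))
    positivity
  refine ⟨2*M*(2880*13824) + 2*M + 1, by positivity, 342, by norm_num, ?_⟩
  intro s hs f _hfmeas hfb N hN hN0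
  have hs0 : (0:ℝ) < s := by linarith
  set Es := Real.exp (s/2) with hEsdef
  have hEs : 0 < Es := by rw [hEsdef]; exact Real.exp_pos _
  set R := (3/4) * Es with hRdef
  have hR0 : 0 < R := by rw [hRdef]; positivity
  have hsp : (0:ℝ) < Real.sqrt (4*Real.pi) := Real.sqrt_pos.2 (by positivity)
  have hrho : ∀ y, 0 ≤ rho1 y := by
    intro y; unfold rho1; positivity
  -- key support/bound fact
  have key : ∀ y : ℝ, N y ≠ 0 → y ≤ -R ∧ |N y| ≤ M := by
    intro y hy
    by_cases hyb : y ≤ -Es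
    · exact absurd (hN0 y hyb) hy
    push_neg at hyb
    have hNy := hN y hyb
    have hdx : deriv χ ((y * Real.exp (-s/2) + 1) / ε₀) ≠ 0 := by
      intro h0; apply hy; rw [hNy, h0, mul_zero]
    obtain ⟨hx1, hx2⟩ := deriv_loc18 χ hχ0 hχ1 hdx
    rw [le_div_iff₀ hε₀0] at hx1
    rw [div_le_iff₀ hε₀0] at hx2
    have hD1 : ε₀/8 ≤ y * Real.exp (-s/2) + 1 := by linarith
    have hD2 : y * Real.exp (-s/2) + 1 ≤ ε₀/4 := by linarith
    have hDpos : 0 < y * Real.exp (-s/2) + 1 := by linarith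
    have hprod : Real.exp (-s/2) * Es = 1 := by
      rw [hEsdef, ← Real.exp_add, show -s/2 + s/2 = 0 by ring, Real.exp_zero]
    constructor
    · have h34 : y * Real.exp (-s/2) ≤ -(3/4) := by linarith
      have hy' : (y * Real.exp (-s/2)) * Es = y := by
        rw [mul_assoc, hprod, mul_one]
      rw [hRdef]
      have := mul_le_mul_of_nonneg_right h34 hEs.le
      linarith
    · rw [hNy]
      rw [abs_mul, abs_mul, abs_mul, abs_div,
        abs_of_nonneg hd1, abs_of_pos hDpos,
        abs_of_nonneg (by positivity : (0:ℝ) ≤ Real.exp (-s/2) / ε₀)]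
      have h1 : ((d:ℝ)-1) / (y * Real.exp (-s/2) + 1) ≤ ((d:ℝ)-1) * (8/ε₀) := by
        rw [div_le_iff₀ hDpos]
        have h8 : 1 ≤ (8/ε₀) * (y * Real.exp (-s/2) + 1) := by
          rw [div_mul_eq_mul_div, le_div_iff₀ hε₀0]; linarith
        calc (d:ℝ) - 1 = ((d:ℝ)-1) * 1 := (mul_one _).symm
          _ ≤ ((d:ℝ)-1) * ((8/ε₀) * (y * Real.exp (-s/2) + 1)) :=
              mul_le_mul_of_nonneg_left h8 hd1
          _ = ((d:ℝ)-1) * (8/ε₀) * (y * Real.exp (-s/2) + 1) := by ring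
      have h2 := hfb y
      have he1 : Real.exp (-s/2) ≤ 1 := by
        calc Real.exp (-s/2) ≤ Real.exp 0 := Real.exp_le_exp.mpr (by linarith)
          _ = 1 := Real.exp_zero
      have h3 : Real.exp (-s/2) / ε₀ ≤ 1/ε₀ := by gcongr
      have h4 := hχ' ((y * Real.exp (-s/2) + 1) / ε₀)
      have hb1 : (0:ℝ) ≤ ((d:ℝ)-1) * (8/ε₀) := mul_nonneg hd1 (by positivity)
      have hb12 : (0:ℝ) ≤ ((d:ℝ)-1) * (8/ε₀) * (2*kappa p) := mul_nonneg hb1 (by positivity)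
      calc ((d:ℝ)-1) / (y * Real.exp (-s/2) + 1) * |f y| * (Real.exp (-s/2) / ε₀)
            * |deriv χ ((y * Real.exp (-s/2) + 1) / ε₀)|
          ≤ ((d:ℝ)-1) * (8/ε₀) * (2*kappa p) * (1/ε₀) * Kχ := by
            apply mul_le_mul _ h4 (abs_nonneg _) (mul_nonneg hb12 (by positivity))
            apply mul_le_mul _ h3 (by positivity) hb12
            exact mul_le_mul h1 h2 (abs_nonneg _) hb1
        _ = M := by rw [hMdef]; ring
  have hRs : Real.exp (-R^2/16) ≤ Real.exp (-3*s) := by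
    rw [Real.exp_le_exp]
    have h1 : s/2 + 1 ≤ Es := by
      rw [hEsdef]; have := Real.add_one_le_exp (s/2); linarith
    have h2 : (s/2 + 1)^2 ≤ Es^2 := pow_le_pow_left₀ (by linarith) h1 2
    rw [hRdef]
    nlinarith [h2, hs, sq_nonneg (s - 342)]
  have hGint : Integrable (fun y : ℝ => Real.exp (-(1/16) * y^2)) :=
    integrable_exp_neg_mul_sq (by norm_num)
  constructor
  · -- L² bound
    set c := M^2 * Real.exp (-R^2/8) / Real.sqrt (4*Real.pi) with hcdef
    have hc0 : 0 ≤ c := by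
      rw [hcdef]
      exact div_nonneg (mul_nonneg (sq_nonneg M) (Real.exp_pos _).le) hsp.le
    have hb2 : ∀ y, |N y| ^ (2:ℝ) * rho1 y ≤ c * Real.exp (-(1/16) * y^2) := by
      intro y
      by_cases hy : N y = 0
      · rw [hy, abs_zero, Real.zero_rpow (by norm_num : (2:ℝ) ≠ 0), zero_mul]
        exact mul_nonneg hc0 (Real.exp_pos _).le
      · obtain ⟨hy1, hy2⟩ := key y hy
        have hsqy : R^2 ≤ y^2 := by nlinarith
        rw [show |N y| ^ (2:ℝ) = |N y|^(2:ℕ) by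
          rw [← Real.rpow_natCast]; norm_num]
        unfold rho1
        have hee : Real.exp (-(y^2)/4) ≤ Real.exp (-R^2/8) * Real.exp (-(1/16) * y^2) := by
          rw [← Real.exp_add, Real.exp_le_exp]; nlinarith [hsqy, sq_nonneg R]
        calc |N y|^(2:ℕ) * (Real.exp (-(y^2)/4) / Real.sqrt (4*Real.pi))
            ≤ M^2 * ((Real.exp (-R^2/8) * Real.exp (-(1/16) * y^2)) / Real.sqrt (4*Real.pi)) := by
              apply mul_le_mul (pow_le_pow_left₀ (abs_nonneg _) hy2 2)
                ((div_le_div_iff_of_pos_right hsp).mpr hee) (by positivity) (sq_nonneg M)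
          _ = c * Real.exp (-(1/16) * y^2) := by rw [hcdef]; ring
    have hIle : (∫ y : ℝ, |N y| ^ (2:ℝ) * rho1 y) ≤ 2 * (M^2 * Real.exp (-R^2/8)) := by
      calc (∫ y : ℝ, |N y| ^ (2:ℝ) * rho1 y)
          ≤ ∫ y : ℝ, c * Real.exp (-(1/16) * y^2) :=
            integral_mono_of_nonneg
              (ae_of_all _ fun y => mul_nonneg (Real.rpow_nonneg (abs_nonneg _) _) (hrho y))
              (hGint.const_mul c) (ae_of_all _ hb2)
        _ = c * (2 * Real.sqrt (4*Real.pi)) := by rw [integral_const_mul, gauss_int_val18]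
        _ = 2 * (M^2 * Real.exp (-R^2/8)) := by
            rw [hcdef]; field_simp
    have hI0 : 0 ≤ ∫ y : ℝ, |N y| ^ (2:ℝ) * rho1 y :=
      integral_nonneg fun y => mul_nonneg (Real.rpow_nonneg (abs_nonneg _) _) (hrho y)
    have hB0 : 0 ≤ 2 * M * Real.exp (-R^2/16) :=
      mul_nonneg (mul_nonneg (by norm_num) hM0) (Real.exp_pos _).le
    have hBsq : 2 * (M^2 * Real.exp (-R^2/8)) ≤ (2 * M * Real.exp (-R^2/16))^2 := by
      have he2 : Real.exp (-R^2/16) ^ 2 = Real.exp (-R^2/8) := by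
        rw [sq, ← Real.exp_add]; congr 1; ring
      nlinarith [he2, sq_nonneg M, Real.exp_pos (-R^2/8), sq_nonneg (M * Real.exp (-R^2/16))]
    unfold LrhoNorm
    calc (∫ y : ℝ, |N y| ^ (2:ℝ) * rho1 y) ^ (1/(2:ℝ))
        ≤ ((2 * M * Real.exp (-R^2/16))^2) ^ (1/(2:ℝ)) :=
          Real.rpow_le_rpow hI0 (hIle.trans hBsq) (by norm_num)
      _ = 2 * M * Real.exp (-R^2/16) := by
          rw [← Real.rpow_natCast (2 * M * Real.exp (-R^2/16)) 2, ← Real.rpow_mul hB0]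
          norm_num
      _ ≤ 2 * M * Real.exp (-3*s) :=
          mul_le_mul_of_nonneg_left hRs (mul_nonneg (by norm_num) hM0)
      _ ≤ (2*M*(2880*13824) + 2*M + 1) * Real.exp (-3*s) := by
          apply mul_le_mul_of_nonneg_right _ (Real.exp_pos _).le
          nlinarith [hM0]
  · intro m hm
    set c := M * (2880*13824) * Real.exp (-R^2/16) / Real.sqrt (4*Real.pi) with hcdef
    have hc0 : 0 ≤ c := by
      rw [hcdef]
      exact div_nonneg (mul_nonneg (mul_nonneg hM0 (by norm_num)) (Real.exp_pos _).le) hsp.le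
    have hbm : ∀ y, |N y * hmPoly m y * rho1 y| ≤ c * Real.exp (-(1/16) * y^2) := by
      intro y
      by_cases hy : N y = 0
      · rw [hy, zero_mul, zero_mul, abs_zero]
        exact mul_nonneg hc0 (Real.exp_pos _).le
      · obtain ⟨hy1, hy2⟩ := key y hy
        have hsqy : R^2 ≤ y^2 := by nlinarith
        rw [abs_mul, abs_mul, abs_of_nonneg (hrho y)]
        unfold rho1
        have hh := hm_bound18 hm y
        have hee : Real.exp (y^2/8) * Real.exp (-(y^2)/4)
            ≤ Real.exp (-R^2/16) * Real.exp (-(1/16)*y^2) := by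
          rw [← Real.exp_add, ← Real.exp_add, Real.exp_le_exp]; linarith [hsqy]
        calc |N y| * |hmPoly m y| * (Real.exp (-(y^2)/4) / Real.sqrt (4*Real.pi))
            ≤ M * (2880 * (13824 * Real.exp (y^2/8)))
                * (Real.exp (-(y^2)/4) / Real.sqrt (4*Real.pi)) :=
              mul_le_mul_of_nonneg_right (mul_le_mul hy2 hh (abs_nonneg _) hM0) (by positivity)
          _ = (M * (2880*13824))
                * ((Real.exp (y^2/8) * Real.exp (-(y^2)/4)) / Real.sqrt (4*Real.pi)) := by ring
          _ ≤ (M * (2880*13824))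
                * ((Real.exp (-R^2/16) * Real.exp (-(1/16)*y^2)) / Real.sqrt (4*Real.pi)) :=
              mul_le_mul_of_nonneg_left ((div_le_div_iff_of_pos_right hsp).mpr hee)
                (mul_nonneg hM0 (by norm_num))
          _ = c * Real.exp (-(1/16)*y^2) := by rw [hcdef]; ring
    calc |∫ y : ℝ, N y * hmPoly m y * rho1 y|
        ≤ ∫ y : ℝ, |N y * hmPoly m y * rho1 y| := by
          simpa only [Real.norm_eq_abs] using
            norm_integral_le_integral_norm (μ := (volume : Measure ℝ))
              (fun y => N y * hmPoly m y * rho1 y)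
      _ ≤ ∫ y : ℝ, c * Real.exp (-(1/16) * y^2) :=
          integral_mono_of_nonneg (ae_of_all _ fun y => abs_nonneg _)
            (hGint.const_mul c) (ae_of_all _ hbm)
      _ = c * (2 * Real.sqrt (4*Real.pi)) := by rw [integral_const_mul, gauss_int_val18]
      _ = 2 * (M * (2880*13824)) * Real.exp (-R^2/16) := by
          rw [hcdef]; field_simp
      _ ≤ 2 * (M * (2880*13824)) * Real.exp (-3*s) :=
          mul_le_mul_of_nonneg_left hRs
            (mul_nonneg (by norm_num) (mul_nonneg hM0 (by norm_num)))
      _ ≤ (2*M*(2880*13824) + 2*M + 1) * Real.exp (-3*s) := by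
          apply mul_le_mul_of_nonneg_right _ (Real.exp_pos _).le
          nlinarith [hM0]
end
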